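/- arXiv:1504.07066 — 2 statements merged into one kernel-verified Lean document; each statement's English description precedes it below -/
import Mathlib

section
/- Let T : ℕ and let σ be an assignment with makespan(σ) ≤ T. If two distinct jobs j₁ ≠ j₂ of the same class (c j₁ = c j₂) are assigned to the same machine M and satisfy 2·p j₁ ≥ T + 1 − 2s and 2·p j₂ ≥ T + 1 − 2s, then every job assigned to M belongs to the class c j₁; i.e., a machine processing two large jobs of the same class is an exclusive machine of that class. -/
/-! A job of another class on the machine would force a second setup, so the load there
would be at least `p j₁ + p j₂ + 2s ≥ T + 1`. -/

open Finset

/-- Load of machine `i` under assignment `σ`: total processing time of jobs assigned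
to `i` plus one setup of length `s` per distinct class appearing on `i`. -/
def mLoad {n m k : ℕ} (p : Fin n → ℕ) (c : Fin n → Fin k) (s : ℕ)
    (σ : Fin n → Fin m) (i : Fin m) : ℕ :=
  (∑ j ∈ univ.filter (fun j => σ j = i), p j)
    + s * ((univ.filter (fun j => σ j = i)).image c).card

/-- Makespan of assignment `σ`. -/
def mMakespan {n m k : ℕ} (p : Fin n → ℕ) (c : Fin n → Fin k) (s : ℕ)
    (σ : Fin n → Fin m) : ℕ :=
  univ.sup (mLoad p c s σ)

/-- Optimal makespan: minimum over all assignments. -/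
noncomputable def mOPT (n m k : ℕ) (p : Fin n → ℕ) (c : Fin n → Fin k) (s : ℕ) : ℕ :=
  sInf {M | ∃ σ : Fin n → Fin m, mMakespan p c s σ = M}

section Load

variable {n m k : ℕ} (p : Fin n → ℕ) (c : Fin n → Fin k) (s : ℕ) (σ : Fin n → Fin m)

theorem mLoad_le_mMakespan (i : Fin m) : mLoad p c s σ i ≤ mMakespan p c s σ :=
  le_sup (mem_univ i)

variable {p c s σ}

theorem add_add_two_mul_le_mLoad {i : Fin m} {j₁ j₂ j : Fin n} (hne : j₁ ≠ j₂)
    (h₁ : σ j₁ = i) (h₂ : σ j₂ = i) (hj : σ j = i) (hcj : c j ≠ c j₁) :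
    p j₁ + p j₂ + 2 * s ≤ mLoad p c s σ i := by
  have mem_jobs {x : Fin n} (hx : σ x = i) : x ∈ univ.filter (fun j => σ j = i) := by simpa
  have hsum : p j₁ + p j₂ ≤ ∑ x ∈ univ.filter (fun j => σ j = i), p x :=
    add_le_sum (fun _ _ => Nat.zero_le _) (mem_jobs h₁) (mem_jobs h₂) hne
  have hclasses : 1 < ((univ.filter (fun j => σ j = i)).image c).card :=
    one_lt_card.2 ⟨c j₁, mem_image_of_mem c (mem_jobs h₁), c j, mem_image_of_mem c (mem_jobs hj),
      hcj.symm⟩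
  have hsetups : s * 2 ≤ s * ((univ.filter (fun j => σ j = i)).image c).card :=
    Nat.mul_le_mul_left s hclasses
  unfold mLoad
  omega

end Load

theorem two_large_same_class_exclusive_general (n m k s : ℕ)
    (p : Fin n → ℕ)
    (c : Fin n → Fin k)
    (T : ℕ) (σ : Fin n → Fin m) (hmk : mMakespan p c s σ ≤ T)
    (j₁ j₂ : Fin n) (hne : j₁ ≠ j₂) (hmach : σ j₁ = σ j₂)
    (h₁ : T + 1 - 2 * s ≤ 2 * p j₁) (h₂ : T + 1 - 2 * s ≤ 2 * p j₂) :
    ∀ j : Fin n, σ j = σ j₁ → c j = c j₁ := by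
  intro j hj
  by_contra hcj
  have hload : p j₁ + p j₂ + 2 * s ≤ T :=
    (add_add_two_mul_le_mLoad hne rfl hmach.symm hj hcj).trans
      ((mLoad_le_mMakespan p c s σ _).trans hmk)
  omega

/-- in a schedule with makespan at most `T`, a machine processing two
large jobs (`2·p j ≥ T + 1 - 2s`) of the same class is an exclusive machine of that
class. -/
theorem two_large_same_class_exclusive (n m k s : ℕ)
    (hn : 1 ≤ n) (hm : 1 ≤ m) (hs : 1 ≤ s)
    (p : Fin n → ℕ) (hp : ∀ j, 1 ≤ p j)
    (c : Fin n → Fin k) (hc : Function.Surjective c)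
    (T : ℕ) (σ : Fin n → Fin m) (hmk : mMakespan p c s σ ≤ T)
    (j₁ j₂ : Fin n) (hne : j₁ ≠ j₂) (hmach : σ j₁ = σ j₂) (hcl : c j₁ = c j₂)
    (h₁ : T + 1 - 2 * s ≤ 2 * p j₁) (h₂ : T + 1 - 2 * s ≤ 2 * p j₂) :
    ∀ j : Fin n, σ j = σ j₁ → c j = c j₁ :=
  two_large_same_class_exclusive_general n m k s p c T σ hmk j₁ j₂ hne hmach h₁ h₂
end

section
/- Let λ ≥ 1 be a natural number and let T : ℕ. If σ is a block-schedule for the instance with makespan M, then there exist a merging Q of the instance within classes and a block-schedule σ' of the merged instance whose makespan M' satisfies λ·M' ≤ λ·M + 4·T, such that in the merged instance every merged job of size at most T/λ (i.e., with λ·size ≤ T) belongs to a class of total workload at most T/λ (i.e., tiny jobs occur only in tiny classes). -/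
/-!
For each class, the machines carrying it are cut into consecutive runs, each of scaled work
`L·w > T` unless the whole class is tiny, and all jobs of the class in a run are moved to one
machine of the run, chosen so that at most `T` of scaled work arrives from either side. In a block
schedule at most one class crosses any machine boundary, so a machine receives at most `T` from
below and `T` from above: loads grow by at most `2T`, and no setup is added since the receiving
machine already carried the class. Merging the jobs of each class on each machine into one job
then leaves tiny merged jobs only in tiny classes.
-/

open Finset

/-- `σ` is a block-schedule w.r.t. classification `c`: for every machine index `i`
there is at most one class with some job on a machine of index `≤ i` and some job on
a machine of index `> i`. -/
def IsBlockSchedule {n m k : ℕ} (c : Fin n → Fin k) (σ : Fin n → Fin m) : Prop :=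
  ∀ i : Fin m, ∀ γ₁ γ₂ : Fin k,
    ((∃ j, c j = γ₁ ∧ σ j ≤ i) ∧ (∃ j, c j = γ₁ ∧ i < σ j)) →
    ((∃ j, c j = γ₂ ∧ σ j ≤ i) ∧ (∃ j, c j = γ₂ ∧ i < σ j)) →
    γ₁ = γ₂

/-- Load of machine `i` for an instance whose jobs form an arbitrary finite type. -/
def gLoad {J : Type*} [Fintype J] [DecidableEq J] {m k : ℕ}
    (p : J → ℕ) (c : J → Fin k) (s : ℕ) (σ : J → Fin m) (i : Fin m) : ℕ :=
  (∑ j ∈ univ.filter (fun j => σ j = i), p j)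
    + s * ((univ.filter (fun j => σ j = i)).image c).card

/-- Makespan for an instance whose jobs form an arbitrary finite type. -/
def gMakespan {J : Type*} [Fintype J] [DecidableEq J] {m k : ℕ}
    (p : J → ℕ) (c : J → Fin k) (s : ℕ) (σ : J → Fin m) : ℕ :=
  univ.sup (gLoad p c s σ)

/-- Block-schedule property for an instance whose jobs form an arbitrary type. -/
def gIsBlockSchedule {J : Type*} {m k : ℕ} (c : J → Fin k) (σ : J → Fin m) : Prop :=
  ∀ i : Fin m, ∀ γ₁ γ₂ : Fin k,
    ((∃ j, c j = γ₁ ∧ σ j ≤ i) ∧ (∃ j, c j = γ₁ ∧ i < σ j)) →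
    ((∃ j, c j = γ₂ ∧ σ j ≤ i) ∧ (∃ j, c j = γ₂ ∧ i < σ j)) →
    γ₁ = γ₂

section Grouping

variable {α : Type*} [LinearOrder α] (W : α → ℕ) (thr : ℕ)

lemma exists_threshold_crossing {S : Finset α} (hS : thr < ∑ i ∈ S, W i) :
    ∃ t ∈ S, ∑ i ∈ S with i < t, W i ≤ thr ∧ thr < ∑ i ∈ S with i ≤ t, W i := by
  induction S using Finset.induction_on_max with
  | empty => simp at hS
  | insert a s ha ih =>
    by_cases hs : thr < ∑ i ∈ s, W i
    · obtain ⟨t, ht, hlt, hle⟩ := ih hs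
      have hta := ha t ht
      refine ⟨t, mem_insert_of_mem ht, ?_, ?_⟩
      · rwa [filter_insert, if_neg (lt_asymm hta)]
      · rwa [filter_insert, if_neg (not_le.2 hta)]
    · refine ⟨a, mem_insert_self a s, ?_, ?_⟩
      · rw [filter_insert, if_neg (lt_irrefl a), filter_true_of_mem ha]
        exact not_lt.1 hs
      · rwa [filter_true_of_mem fun i hi => ?_]
        rcases mem_insert.1 hi with rfl | hi
        exacts [le_rfl, (ha i hi).le]

/-- `F` is a group of elements of `S` gathered on `e`; a light group is allowed only when all of
`S` is light. -/
def IsBalancedGroup (S : Finset α) (e : α) (F : Finset α) : Prop :=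
  (F.Nonempty → ∑ i ∈ S, W i ≤ thr ∨ thr < ∑ i ∈ F, W i) ∧
    ∑ i ∈ F with i < e, W i ≤ thr ∧ ∑ i ∈ F with e < i, W i ≤ thr

theorem exists_balanced_grouping (S : Finset α) :
    ∃ g : α → α, (∀ i ∈ S, g i ∈ S) ∧ ∀ e, IsBalancedGroup W thr S e {i ∈ S | g i = e} := by
  induction S using Finset.strongInduction with
  | H S ih =>
  by_cases hS : ∑ i ∈ S, W i ≤ thr
  · refine ⟨id, fun i hi => hi, fun e => ⟨fun _ => Or.inl hS, ?_, ?_⟩⟩ <;>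
      rw [filter_filter, filter_false_of_mem (by rintro i - ⟨rfl, h⟩; exact lt_irrefl _ h)] <;>
      exact (sum_empty).trans_le (Nat.zero_le _)
  obtain ⟨t, htS, hbelow, hupto⟩ := exists_threshold_crossing W thr (not_le.1 hS)
  by_cases hrest : ∑ i ∈ S with t < i, W i ≤ thr
  · refine ⟨fun _ => t, fun _ _ => htS, fun e => ?_⟩
    rcases eq_or_ne t e with rfl | hne
    · rw [filter_true_of_mem fun _ _ => rfl]
      exact ⟨fun _ => Or.inr (not_le.1 hS), hbelow, hrest⟩
    · simp [IsBalancedGroup, hne]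
  obtain ⟨g', hg'S, hg'⟩ := ih _ (filter_ssubset.2 ⟨t, htS, lt_irrefl t⟩)
  have hg'gt : ∀ i ∈ S, t < i → t < g' i := fun i hi hti =>
    (mem_filter.1 (hg'S i (mem_filter.2 ⟨hi, hti⟩))).2
  refine ⟨fun i => if i ≤ t then t else g' i, fun i hi => ?_, fun e => ?_⟩
  · dsimp only
    split_ifs with hit
    exacts [htS, (mem_filter.1 (hg'S i (mem_filter.2 ⟨hi, not_le.1 hit⟩))).1]
  rcases eq_or_ne e t with rfl | hne
  · have hfiber : {i ∈ S | (if i ≤ e then e else g' i) = e} = {i ∈ S | i ≤ e} := by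
      refine filter_congr fun i hi => ?_
      split_ifs with hie
      · simp [hie]
      · simpa [hie] using (hg'gt i hi (not_le.1 hie)).ne'
    rw [hfiber]
    refine ⟨fun _ => Or.inr hupto, ?_, ?_⟩ <;> rw [filter_filter]
    · rwa [filter_congr fun i _ => and_iff_right_of_imp le_of_lt]
    · rw [filter_false_of_mem fun i _ h => not_lt_of_ge h.1 h.2, sum_empty]
      exact Nat.zero_le _
  · have hfiber : {i ∈ S | (if i ≤ t then t else g' i) = e} = {i ∈ {i ∈ S | t < i} | g' i = e} := by
      rw [filter_filter]
      refine filter_congr fun i _ => ?_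
      split_ifs with hit
      · simp [hit, hne.symm]
      · simp [not_le.1 hit]
    obtain ⟨hheavy, hlt, hgt⟩ := hg' e
    rw [hfiber]
    exact ⟨fun hF => Or.inr ((hheavy hF).resolve_left hrest), hlt, hgt⟩

end Grouping

lemma sum_le_add_sum_filter_lt_add_sum_filter_gt {α : Type*} [LinearOrder α] (F : Finset α)
    (f : α → ℕ) (e : α) :
    ∑ i ∈ F, f i ≤ f e + ∑ i ∈ F with i < e, f i + ∑ i ∈ F with e < i, f i := by
  rw [← sum_filter_add_sum_filter_not F (· < e),
    ← sum_filter_add_sum_filter_not {i ∈ F | ¬i < e} (e < ·), filter_filter, filter_filter]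
  have hmid : ∑ i ∈ F with ¬i < e ∧ ¬e < i, f i ≤ f e := by
    refine (sum_le_sum_of_subset fun i hi => ?_).trans (sum_singleton f e).le
    obtain ⟨-, h₁, h₂⟩ := mem_filter.1 hi
    exact mem_singleton.2 (le_antisymm (not_lt.1 h₂) (not_lt.1 h₁))
  have hgt : ∑ i ∈ F with ¬i < e ∧ e < i, f i ≤ ∑ i ∈ F with e < i, f i :=
    sum_le_sum_of_subset fun i hi => by
      simp only [mem_filter] at hi ⊢
      exact ⟨hi.1, hi.2.2⟩
  omega

lemma sum_le_of_ne_zero_imp_eq {ι : Type*} [Fintype ι] {f : ι → ℕ} {T : ℕ} (hf : ∀ i, f i ≤ T)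
    (huniq : ∀ i j, f i ≠ 0 → f j ≠ 0 → i = j) : ∑ i, f i ≤ T := by
  by_cases h : ∃ i, f i ≠ 0
  · obtain ⟨i, hi⟩ := h
    rw [sum_eq_single i (fun j _ hj => by_contra fun hne => hj (huniq j i hne hi)) (by simp)]
    exact hf i
  · simp [not_exists_not.1 h]

lemma gIsBlockSchedule.of_forall_exists {J J' : Type*} {m k : ℕ} {c : J → Fin k}
    {σ : J → Fin m} {c' : J' → Fin k} {σ' : J' → Fin m}
    (hσ : gIsBlockSchedule c σ) (h : ∀ j', ∃ j, c j = c' j' ∧ σ j = σ' j') :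
    gIsBlockSchedule c' σ' := by
  have lift : ∀ γ (P : Fin m → Prop), (∃ j', c' j' = γ ∧ P (σ' j')) → ∃ j, c j = γ ∧ P (σ j) := by
    rintro γ P ⟨j', rfl, hP⟩
    obtain ⟨j, hc, hσj⟩ := h j'
    exact ⟨j, hc, hσj ▸ hP⟩
  intro i γ₁ γ₂ h₁ h₂
  exact hσ i γ₁ γ₂ ⟨lift _ (· ≤ i) h₁.1, lift _ (i < ·) h₁.2⟩
    ⟨lift _ (· ≤ i) h₂.1, lift _ (i < ·) h₂.2⟩

section Regroup

variable {J : Type*} [Fintype J] {m k : ℕ} (p : J → ℕ) (c : J → Fin k) (σ : J → Fin m)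

def classMachines (γ : Fin k) : Finset (Fin m) := ({j | c j = γ} : Finset J).image σ

def classWork (γ : Fin k) (i : Fin m) : ℕ := ∑ j with c j = γ ∧ σ j = i, p j

def regroup (g : Fin k → Fin m → Fin m) : J → Fin m := fun j => g (c j) (σ j)

variable {c σ}

lemma mem_classMachines {γ : Fin k} {i : Fin m} :
    i ∈ classMachines c σ γ ↔ ∃ j, c j = γ ∧ σ j = i := by
  simp [classMachines]

lemma gIsBlockSchedule.eq_of_lt (hσ : gIsBlockSchedule c σ) {γ₁ γ₂ : Fin k} {i₁ i₂ e : Fin m}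
    (hi₁ : i₁ ∈ classMachines c σ γ₁) (he₁ : e ∈ classMachines c σ γ₁) (h₁ : i₁ < e)
    (hi₂ : i₂ ∈ classMachines c σ γ₂) (he₂ : e ∈ classMachines c σ γ₂) (h₂ : i₂ < e) :
    γ₁ = γ₂ := by
  rw [mem_classMachines] at hi₁ he₁ hi₂ he₂
  obtain ⟨j₁, hj₁, rfl⟩ := hi₁
  obtain ⟨j₂, hj₂, rfl⟩ := hi₂
  obtain ⟨j₁', hj₁', rfl⟩ := he₁
  obtain ⟨j₂', hj₂', he₂⟩ := he₂
  exact hσ (max (σ j₁) (σ j₂)) γ₁ γ₂ ⟨⟨j₁, hj₁, le_max_left _ _⟩, ⟨j₁', hj₁', max_lt h₁ h₂⟩⟩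
    ⟨⟨j₂, hj₂, le_max_right _ _⟩, ⟨j₂', hj₂', he₂ ▸ max_lt h₁ h₂⟩⟩

lemma gIsBlockSchedule.eq_of_gt (hσ : gIsBlockSchedule c σ) {γ₁ γ₂ : Fin k} {i₁ i₂ e : Fin m}
    (hi₁ : i₁ ∈ classMachines c σ γ₁) (he₁ : e ∈ classMachines c σ γ₁) (h₁ : e < i₁)
    (hi₂ : i₂ ∈ classMachines c σ γ₂) (he₂ : e ∈ classMachines c σ γ₂) (h₂ : e < i₂) :
    γ₁ = γ₂ := by
  rw [mem_classMachines] at hi₁ he₁ hi₂ he₂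
  obtain ⟨j₁, hj₁, rfl⟩ := hi₁
  obtain ⟨j₂, hj₂, rfl⟩ := hi₂
  obtain ⟨j₁', hj₁', he₁⟩ := he₁
  obtain ⟨j₂', hj₂', he₂⟩ := he₂
  exact hσ e γ₁ γ₂ ⟨⟨j₁', hj₁', he₁.le⟩, ⟨j₁, hj₁, h₁⟩⟩ ⟨⟨j₂', hj₂', he₂.le⟩, ⟨j₂, hj₂, h₂⟩⟩

variable (c σ)

lemma sum_classWork_filter (γ : Fin k) (P : Fin m → Prop) [DecidablePred P] :
    ∑ i ∈ classMachines c σ γ with P i, classWork p c σ γ i = ∑ j with c j = γ ∧ P (σ j), p j := by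
  rw [← sum_fiberwise_of_maps_to (g := σ) (t := {i ∈ classMachines c σ γ | P i})]
  · refine sum_congr rfl fun i hi => sum_congr ?_ fun _ _ => rfl
    ext j
    simp only [mem_filter, mem_univ, true_and]
    constructor
    · rintro ⟨hc, rfl⟩; exact ⟨⟨hc, (mem_filter.1 hi).2⟩, rfl⟩
    · rintro ⟨⟨hc, -⟩, rfl⟩; exact ⟨hc, rfl⟩
  · intro j hj
    simp only [mem_filter, mem_univ, true_and] at hj
    exact mem_filter.2 ⟨mem_classMachines.2 ⟨j, hj.1, rfl⟩, hj.2⟩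

lemma sum_classWork (γ : Fin k) :
    ∑ i ∈ classMachines c σ γ, classWork p c σ γ i = ∑ j with c j = γ, p j := by
  simpa using sum_classWork_filter p c σ γ fun _ => True

lemma classWork_regroup (g : Fin k → Fin m → Fin m) (γ : Fin k) (e : Fin m) :
    classWork p c (regroup c σ g) γ e =
      ∑ i ∈ classMachines c σ γ with g γ i = e, classWork p c σ γ i := by
  rw [sum_classWork_filter, classWork]
  refine sum_congr (filter_congr fun j _ => ?_) fun _ _ => rfl
  constructor <;> rintro ⟨rfl, h⟩ <;> exact ⟨rfl, h⟩

lemma sum_filter_eq_sum_classWork (e : Fin m) :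
    ∑ j with σ j = e, p j = ∑ γ, classWork p c σ γ e := by
  rw [← sum_fiberwise (s := {j | σ j = e}) (g := c)]
  refine sum_congr rfl fun γ _ => ?_
  rw [classWork, filter_filter]
  exact sum_congr (filter_congr fun _ _ => and_comm) fun _ _ => rfl

def IsBalancedRegrouping (L T : ℕ) (g : Fin k → Fin m → Fin m) : Prop :=
  ∀ γ, (∀ i ∈ classMachines c σ γ, g γ i ∈ classMachines c σ γ) ∧
    ∀ e, IsBalancedGroup (fun i => L * classWork p c σ γ i) T (classMachines c σ γ) e
      {i ∈ classMachines c σ γ | g γ i = e}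

variable {p c σ} {L T : ℕ} {g : Fin k → Fin m → Fin m}

lemma IsBalancedRegrouping.exists_eq_regroup (hg : IsBalancedRegrouping p c σ L T g) (j : J) :
    ∃ j', c j' = c j ∧ σ j' = regroup c σ g j :=
  mem_classMachines.1 ((hg _).1 _ (mem_classMachines.2 ⟨j, rfl, rfl⟩))

lemma IsBalancedRegrouping.mem_of_mem_fiber (hg : IsBalancedRegrouping p c σ L T g)
    {γ : Fin k} {i e : Fin m} (hi : i ∈ {i ∈ classMachines c σ γ | g γ i = e}) :
    i ∈ classMachines c σ γ ∧ e ∈ classMachines c σ γ :=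
  have hi := mem_filter.1 hi
  ⟨hi.1, hi.2 ▸ (hg γ).1 i hi.1⟩

lemma IsBalancedRegrouping.sum_below_le (hg : IsBalancedRegrouping p c σ L T g)
    (hσ : gIsBlockSchedule c σ) (e : Fin m) :
    ∑ γ, ∑ i ∈ {i ∈ classMachines c σ γ | g γ i = e} with i < e, L * classWork p c σ γ i ≤ T := by
  refine sum_le_of_ne_zero_imp_eq (fun γ => ((hg γ).2 e).2.1) fun γ₁ γ₂ h₁ h₂ => ?_
  obtain ⟨i₁, hi₁, -⟩ := exists_ne_zero_of_sum_ne_zero h₁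
  obtain ⟨i₂, hi₂, -⟩ := exists_ne_zero_of_sum_ne_zero h₂
  rw [mem_filter] at hi₁ hi₂
  exact hσ.eq_of_lt (hg.mem_of_mem_fiber hi₁.1).1 (hg.mem_of_mem_fiber hi₁.1).2 hi₁.2
    (hg.mem_of_mem_fiber hi₂.1).1 (hg.mem_of_mem_fiber hi₂.1).2 hi₂.2

lemma IsBalancedRegrouping.sum_above_le (hg : IsBalancedRegrouping p c σ L T g)
    (hσ : gIsBlockSchedule c σ) (e : Fin m) :
    ∑ γ, ∑ i ∈ {i ∈ classMachines c σ γ | g γ i = e} with e < i, L * classWork p c σ γ i ≤ T := by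
  refine sum_le_of_ne_zero_imp_eq (fun γ => ((hg γ).2 e).2.2) fun γ₁ γ₂ h₁ h₂ => ?_
  obtain ⟨i₁, hi₁, -⟩ := exists_ne_zero_of_sum_ne_zero h₁
  obtain ⟨i₂, hi₂, -⟩ := exists_ne_zero_of_sum_ne_zero h₂
  rw [mem_filter] at hi₁ hi₂
  exact hσ.eq_of_gt (hg.mem_of_mem_fiber hi₁.1).1 (hg.mem_of_mem_fiber hi₁.1).2 hi₁.2
    (hg.mem_of_mem_fiber hi₂.1).1 (hg.mem_of_mem_fiber hi₂.1).2 hi₂.2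

lemma IsBalancedRegrouping.mul_sum_regroup_le (hg : IsBalancedRegrouping p c σ L T g)
    (hσ : gIsBlockSchedule c σ) (e : Fin m) :
    L * ∑ j with regroup c σ g j = e, p j ≤ L * ∑ j with σ j = e, p j + 2 * T := by
  set F := fun γ => {i ∈ classMachines c σ γ | g γ i = e}
  set W := fun γ i => L * classWork p c σ γ i
  have hW : ∑ γ, W γ e = L * ∑ j with σ j = e, p j := by
    rw [sum_filter_eq_sum_classWork p c σ e, mul_sum]
  calc L * ∑ j with regroup c σ g j = e, p j
      = ∑ γ, ∑ i ∈ F γ, W γ i := by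
        rw [sum_filter_eq_sum_classWork, mul_sum]
        exact sum_congr rfl fun γ _ => by rw [classWork_regroup, mul_sum]
    _ ≤ ∑ γ, (W γ e + ∑ i ∈ F γ with i < e, W γ i + ∑ i ∈ F γ with e < i, W γ i) :=
        sum_le_sum fun γ _ => sum_le_add_sum_filter_lt_add_sum_filter_gt _ _ _
    _ ≤ L * ∑ j with σ j = e, p j + 2 * T := by
        rw [sum_add_distrib, sum_add_distrib, hW]
        have hbelow : ∑ γ, ∑ i ∈ F γ with i < e, W γ i ≤ T := hg.sum_below_le hσ e
        have habove : ∑ γ, ∑ i ∈ F γ with e < i, W γ i ≤ T := hg.sum_above_le hσ e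
        omega

lemma IsBalancedRegrouping.mul_sum_class_le (hg : IsBalancedRegrouping p c σ L T g) (j : J)
    (h : L * classWork p c (regroup c σ g) (c j) (regroup c σ g j) ≤ T) :
    L * ∑ i with c i = c j, p i ≤ T := by
  have hF : {i ∈ classMachines c σ (c j) | g (c j) i = regroup c σ g j}.Nonempty :=
    ⟨σ j, mem_filter.2 ⟨mem_classMachines.2 ⟨j, rfl, rfl⟩, rfl⟩⟩
  rcases ((hg (c j)).2 (regroup c σ g j)).1 hF with hlight | hheavy
  · rwa [← mul_sum, sum_classWork] at hlight
  · rw [← mul_sum, ← classWork_regroup] at hheavy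
    omega

end Regroup

theorem exists_regroup {J : Type*} [Fintype J] {m k : ℕ} (p : J → ℕ) (c : J → Fin k)
    {σ : J → Fin m} (hσ : gIsBlockSchedule c σ) (L T : ℕ) :
    ∃ τ : J → Fin m, (∀ j, ∃ j', c j' = c j ∧ σ j' = τ j) ∧
      (∀ e, L * ∑ j with τ j = e, p j ≤ L * ∑ j with σ j = e, p j + 2 * T) ∧
      ∀ j, L * classWork p c τ (c j) (τ j) ≤ T → L * ∑ i with c i = c j, p i ≤ T := by
  obtain ⟨g, hg⟩ : ∃ g, IsBalancedRegrouping p c σ L T g := Classical.axiomOfChoice fun γ =>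
    exists_balanced_grouping (fun i => L * classWork p c σ γ i) T (classMachines c σ γ)
  exact ⟨regroup c σ g, hg.exists_eq_regroup, hg.mul_sum_regroup_le hσ, hg.mul_sum_class_le⟩

lemma exists_finpartition_fibers {J X : Type*} [Fintype J] [DecidableEq J] (φ : J → X) :
    ∃ (Q : Finpartition (univ : Finset J)) (rep : {B // B ∈ Q.parts} → J),
      ∀ B j, j ∈ B.1 ↔ φ j = φ (rep B) := by
  classical
  let Q := Finpartition.ofSetoid (Setoid.ker φ)
  refine ⟨Q, fun B => (Q.nonempty_of_mem_parts B.2).choose, fun B j => ?_⟩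
  have hrep := (Q.nonempty_of_mem_parts B.2).choose_spec
  rw [← Q.part_eq_of_mem B.2 hrep, Finpartition.mem_part_ofSetoid_iff_rel, Setoid.ker_def,
    eq_comm]

lemma sum_parts_filter_le {J : Type*} [Fintype J] [DecidableEq J] {m : ℕ}
    (Q : Finpartition (univ : Finset J)) (p : J → ℕ) {τ : J → Fin m}
    {τ' : {B // B ∈ Q.parts} → Fin m} (h : ∀ B, ∀ j ∈ B.1, τ j = τ' B) (e : Fin m) :
    ∑ B with τ' B = e, ∑ j ∈ B.1, p j ≤ ∑ j with τ j = e, p j := by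
  have hdisj : (({B | τ' B = e} : Finset {B // B ∈ Q.parts}) : Set {B // B ∈ Q.parts})
      |>.PairwiseDisjoint Subtype.val :=
    fun B _ B' _ hne => Q.disjoint B.2 B'.2 (Subtype.coe_ne_coe.2 hne)
  rw [← sum_biUnion hdisj]
  refine sum_le_sum_of_subset fun j hj => ?_
  obtain ⟨B, hB, hjB⟩ := mem_biUnion.1 hj
  exact mem_filter.2 ⟨mem_univ j, (h B j hjB).trans (mem_filter.1 hB).2⟩

section Load

variable {J J' : Type*} [Fintype J] [DecidableEq J] [Fintype J'] [DecidableEq J'] {m k : ℕ}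
  {p : J → ℕ} {c : J → Fin k} {σ : J → Fin m} {p' : J' → ℕ} {c' : J' → Fin k}
  {σ' : J' → Fin m} {s L D : ℕ}

lemma mul_gLoad_le (h : ∀ j', ∃ j, c j = c' j' ∧ σ j = σ' j') {e : Fin m}
    (hsum : L * ∑ j' with σ' j' = e, p' j' ≤ L * ∑ j with σ j = e, p j + D) :
    L * gLoad p' c' s σ' e ≤ L * gLoad p c s σ e + D := by
  have hclasses : ({j' | σ' j' = e} : Finset J').image c' ⊆ ({j | σ j = e} : Finset J).image c := by
    intro γ hγ
    obtain ⟨j', hj', rfl⟩ := mem_image.1 hγ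
    obtain ⟨j, hc, hσj⟩ := h j'
    exact mem_image.2 ⟨j, mem_filter.2 ⟨mem_univ j, hσj.trans (mem_filter.1 hj').2⟩, hc⟩
  have := Nat.mul_le_mul_left (L * s) (card_le_card hclasses)
  simp only [gLoad, mul_add, ← mul_assoc]
  omega

lemma mul_gMakespan_le (h : ∀ e, L * gLoad p' c' s σ' e ≤ L * gLoad p c s σ e + D) :
    L * gMakespan p' c' s σ' ≤ L * gMakespan p c s σ + D := by
  refine sup_induction (p := fun x => L * x ≤ L * gMakespan p c s σ + D) (by simp)
    (fun a ha b hb => ?_) fun e _ => (h e).trans ?_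
  · rcases le_total a b with hab | hab
    · rwa [sup_of_le_right hab]
    · rwa [sup_of_le_left hab]
  · gcongr
    exact le_sup (mem_univ e)

end Load

theorem merging_tiny_jobs_into_tiny_classes_general (n m k s L T : ℕ)
    (p : Fin n → ℕ)
    (c : Fin n → Fin k)
    (σ : Fin n → Fin m) (hσ : IsBlockSchedule c σ) :
    ∃ (Q : Finpartition (univ : Finset (Fin n)))
      (cQ : {B // B ∈ Q.parts} → Fin k)
      (σ' : {B // B ∈ Q.parts} → Fin m),
      -- each block of the merging lies within a single class, of value `cQ B`
      (∀ B : {B // B ∈ Q.parts}, ∀ j ∈ B.1, c j = cQ B) ∧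
      -- `σ'` is a block-schedule of the merged instance
      gIsBlockSchedule cQ σ' ∧
      -- its makespan `M'` satisfies `L·M' ≤ L·M + 4T`
      L * gMakespan (fun B : {B // B ∈ Q.parts} => ∑ j ∈ B.1, p j) cQ s σ'
        ≤ L * mMakespan p c s σ + 4 * T ∧
      -- tiny merged jobs occur only in tiny classes
      (∀ B : {B // B ∈ Q.parts}, L * (∑ j ∈ B.1, p j) ≤ T →
        L * (∑ j ∈ univ.filter (fun j => c j = cQ B), p j) ≤ T) := by
  obtain ⟨τ, hτσ, hτload, hτtiny⟩ := exists_regroup p c hσ L T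
  obtain ⟨Q, rep, hrep⟩ := exists_finpartition_fibers fun j => (c j, τ j)
  have hmem : ∀ B j, j ∈ B.1 ↔ c j = c (rep B) ∧ τ j = τ (rep B) := fun B j =>
    (hrep B j).trans Prod.ext_iff
  refine ⟨Q, fun B => c (rep B), fun B => τ (rep B), fun B j hj => ((hmem B j).1 hj).1,
    gIsBlockSchedule.of_forall_exists (gIsBlockSchedule.of_forall_exists hσ hτσ)
      fun B => ⟨rep B, rfl, rfl⟩, ?_, fun B hB => hτtiny (rep B) ?_⟩
  · calc _ ≤ L * gMakespan p c s τ + 0 :=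
          mul_gMakespan_le fun e => mul_gLoad_le (fun B => ⟨rep B, rfl, rfl⟩) <|
            Nat.mul_le_mul_left L <| sum_parts_filter_le Q p (fun B j hj => ((hmem B j).1 hj).2) e
      _ ≤ L * gMakespan p c s σ + 2 * T := mul_gMakespan_le fun e => mul_gLoad_le hτσ (hτload e)
      _ = L * mMakespan p c s σ + 2 * T := rfl
      _ ≤ _ := by omega
  · rwa [classWork, ← filter_congr fun j _ => hmem B j, filter_mem_eq_inter, univ_inter]

/-- given a block-schedule `σ` with makespan `M`, there are a merging
`Q` of the jobs within classes (a partition of the jobs whose blocks respect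
classes, blocks becoming the merged jobs with summed sizes `∑ j ∈ B, p j` and the
common class `cQ B`) and a block-schedule `σ'` of the merged instance with makespan
`M'` satisfying `L·M' ≤ L·M + 4T`, in which every tiny merged job
(`L·size ≤ T`) belongs to a tiny class (`L·workload ≤ T`). -/
theorem merging_tiny_jobs_into_tiny_classes (n m k s L T : ℕ)
    (hn : 1 ≤ n) (hm : 1 ≤ m) (hs : 1 ≤ s) (hL : 1 ≤ L)
    (p : Fin n → ℕ) (hp : ∀ j, 1 ≤ p j)
    (c : Fin n → Fin k) (hc : Function.Surjective c)
    (σ : Fin n → Fin m) (hσ : IsBlockSchedule c σ) :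
    ∃ (Q : Finpartition (univ : Finset (Fin n)))
      (cQ : {B // B ∈ Q.parts} → Fin k)
      (σ' : {B // B ∈ Q.parts} → Fin m),
      -- each block of the merging lies within a single class, of value `cQ B`
      (∀ B : {B // B ∈ Q.parts}, ∀ j ∈ B.1, c j = cQ B) ∧
      -- `σ'` is a block-schedule of the merged instance
      gIsBlockSchedule cQ σ' ∧
      -- its makespan `M'` satisfies `L·M' ≤ L·M + 4T`
      L * gMakespan (fun B : {B // B ∈ Q.parts} => ∑ j ∈ B.1, p j) cQ s σ'
        ≤ L * mMakespan p c s σ + 4 * T ∧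
      -- tiny merged jobs occur only in tiny classes
      (∀ B : {B // B ∈ Q.parts}, L * (∑ j ∈ B.1, p j) ≤ T →
        L * (∑ j ∈ univ.filter (fun j => c j = cQ B), p j) ≤ T) :=
  merging_tiny_jobs_into_tiny_classes_general n m k s L T p c σ hσ
end
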